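/- Let V be a 4-dimensional complex vector space, Ω a nonzero element of ⋀⁴V, and σ ∈ ⋀²V non-decomposable, so that B_σ is a nondegenerate alternating form on V. For a 2-dimensional subspace Λ ⊆ V let Λ^∠ := {w ∈ V : B_σ(w,v) = 0 for all v ∈ Λ}. Then for any two distinct 2-dimensional subspaces Λ, Λ' of V, π_σ(Λ) = π_σ(Λ') if and only if Λ' = Λ^∠. -/

import Mathlib

open ExteriorAlgebra

/-- `u` is a Plücker vector of the `m`-dimensional subspace `Λ`: it is the wedge of a
spanning family of `Λ`. -/
def IsPluckerVector {V : Type*} [AddCommGroup V] [Module ℂ V] (m : ℕ)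
    (Λ : Submodule ℂ V) (u : ExteriorAlgebra ℂ V) : Prop :=
  ∃ v : Fin m → V, Submodule.span ℂ (Set.range v) = Λ ∧ u = ιMulti ℂ m v

/-- The images of `u` and `u'` in the quotient `(⋀V)/Z` span the same line; this expresses
`π_Z(Λ) = π_Z(Λ')` for subspaces with Plücker vectors `u` and `u'`. -/
def ProjEq {V : Type*} [AddCommGroup V] [Module ℂ V] (Z : Submodule ℂ (ExteriorAlgebra ℂ V))
    (u u' : ExteriorAlgebra ℂ V) : Prop :=
  Submodule.span ℂ {Z.mkQ u} = Submodule.span ℂ {Z.mkQ u'}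

/-!
Write `u = a ∧ b` and `u' = a' ∧ b'`. The equality `π_σ(Λ) = π_σ(Λ')` means `d • σ = u' - c • u`
with `c ≠ 0`. Then `d ≠ 0` because `Λ ≠ Λ'`, and `Λ ∩ Λ' = 0` because two planes meeting in a line
have every combination of their Plücker vectors decomposable. Wedging the relation with `w ∧ v`
gives `B(w, v) = 0` for `w ∈ Λ'`, `v ∈ Λ`; and if `B(w, Λ) = 0` with `w ∉ Λ'`, then every `v ∈ Λ`
annihilates `w ∧ u'`, so `Λ + Λ' ⊆ span(w, Λ')`, which is too small to be `V`.

Conversely, if `Λ' = Λ^∠` then `Λ ∩ Λ' = 0` (a common nonzero vector `e` gives `u = e ∧ g` with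
`g ∈ Λ`, so `B` vanishes on `Λ`, forcing `Λ ⊆ Λ'`), and `a, b, a', b'` is a basis of `V`. In the
expansion of `σ` over the `eᵢ ∧ eⱼ`, the vanishing of `B` on `Λ' × Λ` kills the four mixed
coefficients, so `σ = α • u + β • u'`, where `α, β ≠ 0` since `σ` is not decomposable.
-/

theorem Fin.eq_or_swap_of_injective_vecCons_four :
    ∀ k l i j a b : Fin 4, Function.Injective ![k, l, i, j] → Function.Injective ![k, l, a, b] →
      (a = i ∧ b = j) ∨ (a = j ∧ b = i) := by
  decide

namespace ExteriorAlgebra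

section CommRing

variable {R M : Type*} [CommRing R] [AddCommGroup M] [Module R M]

theorem ι_mul_ι_comm (x y : M) : ι R x * ι R y = -(ι R y * ι R x) :=
  eq_neg_of_add_eq_zero_left (ι_add_mul_swap x y)

theorem ι_mul_ι_mem_span_singleton {a b x y : M} (hx : x ∈ Submodule.span R {a, b})
    (hy : y ∈ Submodule.span R {a, b}) : ι R x * ι R y ∈ R ∙ (ι R a * ι R b) := by
  obtain ⟨x₁, x₂, rfl⟩ := Submodule.mem_span_pair.1 hx
  obtain ⟨y₁, y₂, rfl⟩ := Submodule.mem_span_pair.1 hy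
  refine Submodule.mem_span_singleton.2 ⟨x₁ * y₂ - x₂ * y₁, ?_⟩
  simp only [map_add, map_smul, add_mul, mul_add, smul_mul_smul_comm, ι_sq_zero, smul_zero,
    ι_mul_ι_comm b a]
  module

open scoped Pointwise in
theorem exists_sum_ι_mul_ι_of_mem_exteriorPower_two {I : Type*} [Fintype I] {e : I → M}
    (he : Submodule.span R (Set.range e) = ⊤) {x : ExteriorAlgebra R M} (hx : x ∈ ⋀[R]^2 M) :
    ∃ c : I → I → R, x = ∑ i, ∑ j, c i j • (ι R (e i) * ι R (e j)) := by
  have hrange : LinearMap.range (ι R : M →ₗ[R] ExteriorAlgebra R M) =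
      Submodule.span R (Set.range (ι R ∘ e)) := by
    rw [LinearMap.range_eq_map, ← he, Submodule.map_span, Set.range_comp]
  rw [exteriorPower, hrange, pow_two, Submodule.span_mul_span] at hx
  have hle : Submodule.span R (Set.range (ι R ∘ e) * Set.range (ι R ∘ e)) ≤
      Submodule.span R (Set.range fun p : I × I => ι R (e p.1) * ι R (e p.2)) := by
    rw [Submodule.span_le]
    rintro _ ⟨_, ⟨i, rfl⟩, _, ⟨j, rfl⟩, rfl⟩
    exact Submodule.subset_span ⟨(i, j), rfl⟩
  obtain ⟨c, hc⟩ := (Submodule.mem_span_range_iff_exists_fun R).1 (hle hx)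
  exact ⟨fun i j => c (i, j), by rw [← hc, Fintype.sum_prod_type]⟩

theorem sum_ι_mul_ι_fin_four (e : Fin 4 → M) (c : Fin 4 → Fin 4 → R)
    (h02 : c 0 2 = c 2 0) (h03 : c 0 3 = c 3 0) (h12 : c 1 2 = c 2 1) (h13 : c 1 3 = c 3 1) :
    ∑ i, ∑ j, c i j • (ι R (e i) * ι R (e j)) =
      (c 0 1 - c 1 0) • (ι R (e 0) * ι R (e 1)) + (c 2 3 - c 3 2) • (ι R (e 2) * ι R (e 3)) := by
  simp only [Fin.sum_univ_four, ι_sq_zero, ι_mul_ι_comm (e 1) (e 0), ι_mul_ι_comm (e 2) (e 0),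
    ι_mul_ι_comm (e 3) (e 0), ι_mul_ι_comm (e 2) (e 1), ι_mul_ι_comm (e 3) (e 1),
    ι_mul_ι_comm (e 3) (e 2), h02, h03, h12, h13]
  module

end CommRing

section Field

variable {K E : Type*} [Field K] [AddCommGroup E] [Module K E]

theorem ιMulti_ne_zero_of_linearIndependent {n : ℕ} {v : Fin n → E}
    (hv : LinearIndependent K v) : ιMulti K n v ≠ 0 := by
  have h := (exteriorPower.ιMulti_family_linearIndependent_field (n := n) hv).ne_zero
    (Set.powersetCard.ofFinEmbEquiv (RelEmbedding.refl (· ≤ ·) : Fin n ↪o Fin n))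
  rw [Ne, ← ZeroMemClass.coe_eq_zero, exteriorPower.ιMulti_family_apply_coe] at h
  simpa [ExteriorAlgebra.ιMulti_family] using h

theorem ι_mul_ιMulti_eq_zero_iff {m : ℕ} {v : Fin m → E} (hv : LinearIndependent K v) (w : E) :
    ι K w * ιMulti K m v = 0 ↔ w ∈ Submodule.span K (Set.range v) := by
  have hcons : ι K w * ιMulti K m v = ιMulti K (m + 1) (Fin.cons w v) := by
    simp [Matrix.vecTail]
  rw [hcons]
  constructor
  · intro h
    by_contra hw
    exact ιMulti_ne_zero_of_linearIndependent (linearIndependent_finCons.2 ⟨hv, hw⟩) h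
  · intro hw
    exact AlternatingMap.map_linearDependent _ _ fun h => (linearIndependent_finCons.1 h).2 hw

theorem ι_mul_ι_mul_ι_eq_zero_iff {a b : E} (hab : LinearIndependent K ![a, b]) (w : E) :
    ι K w * (ι K a * ι K b) = 0 ↔ w ∈ Submodule.span K {a, b} := by
  convert ι_mul_ιMulti_eq_zero_iff hab w using 2
  · simp
  · rw [Matrix.range_cons_cons_empty]

theorem exists_ι_mul_ι_eq_ι_mul_ι {a b e : E} (he : e ∈ Submodule.span K {a, b}) (he0 : e ≠ 0) :
    ∃ g ∈ Submodule.span K {a, b}, ι K a * ι K b = ι K e * ι K g := by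
  obtain ⟨x, y, rfl⟩ := Submodule.mem_span_pair.1 he
  by_cases hx : x = 0
  · subst hx
    have hy : y ≠ 0 := by rintro rfl; simp at he0
    refine ⟨-y⁻¹ • a, Submodule.smul_mem _ _ (Submodule.subset_span (by simp)), ?_⟩
    simp [ι_mul_ι_comm b a, smul_smul, hy]
  · refine ⟨x⁻¹ • b, Submodule.smul_mem _ _ (Submodule.subset_span (by simp)), ?_⟩
    simp [add_mul, smul_smul, hx]

theorem exists_eq_ι_mul_ι_of_not_disjoint {a b a' b' : E}
    (h : ¬Disjoint (Submodule.span K {a, b}) (Submodule.span K {a', b'})) (s t : K) :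
    ∃ x y : E, s • (ι K a * ι K b) + t • (ι K a' * ι K b') = ι K x * ι K y := by
  obtain ⟨e, he, he', he0⟩ : ∃ e ∈ Submodule.span K {a, b}, e ∈ Submodule.span K {a', b'} ∧
      e ≠ 0 := by
    simpa [Submodule.disjoint_def] using h
  obtain ⟨g, -, hg⟩ := exists_ι_mul_ι_eq_ι_mul_ι he he0
  obtain ⟨g', -, hg'⟩ := exists_ι_mul_ι_eq_ι_mul_ι he' he0
  exact ⟨e, s • g + t • g', by simp [hg, hg', mul_add]⟩

theorem disjoint_of_smul_eq_sub_smul {σ : ExteriorAlgebra K E}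
    (hσ : ¬∃ v w : E, σ = ι K v * ι K w) {a b a' b' : E} {c d : K} (hd : d ≠ 0)
    (h : d • σ = ι K a' * ι K b' - c • (ι K a * ι K b)) :
    Disjoint (Submodule.span K {a, b}) (Submodule.span K {a', b'}) := by
  by_contra hdisj
  obtain ⟨x, y, hxy⟩ := exists_eq_ι_mul_ι_of_not_disjoint hdisj (-(d⁻¹ * c)) d⁻¹
  refine hσ ⟨x, y, ?_⟩
  rw [← hxy, ← inv_smul_smul₀ hd σ, h]
  module

theorem coeff_comm_of_ι_mul_ι_mul_sum_eq_zero {e : Fin 4 → E} (he : LinearIndependent K e)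
    (c : Fin 4 → Fin 4 → K) {k l i j : Fin 4} (hinj : Function.Injective ![k, l, i, j])
    (h : ι K (e k) * ι K (e l) * ∑ a, ∑ b, c a b • (ι K (e a) * ι K (e b)) = 0) :
    c i j = c j i := by
  have hterm : ∀ a b, ι K (e k) * ι K (e l) * (ι K (e a) * ι K (e b)) =
      ιMulti K 4 (e ∘ ![k, l, a, b]) := by
    intro a b
    simp [Matrix.vecTail, mul_assoc]
  set X := ιMulti K 4 (e ∘ ![k, l, i, j])
  have hX : X ≠ 0 := ιMulti_ne_zero_of_linearIndependent (he.comp _ hinj)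
  have hswap : ιMulti K 4 (e ∘ ![k, l, j, i]) = -X := by
    have := (ιMulti K 4).map_swap (e ∘ ![k, l, i, j]) (i := 2) (j := 3) (by decide)
    convert this using 2
    ext x; fin_cases x <;> rfl
  have hij : i ≠ j := fun h => hinj.ne (show (2 : Fin 4) ≠ 3 by decide) (by simpa using h)
  have hne : (i, j) ≠ (j, i) := fun h => hij (Prod.ext_iff.1 h).1
  simp only [Finset.mul_sum, mul_smul_comm, hterm, ← Fintype.sum_prod_type'] at h
  rw [Fintype.sum_eq_add (i, j) (j, i) hne ?_, hswap] at h
  · have : (c i j - c j i) • X = 0 := by rw [sub_smul, sub_eq_add_neg, ← smul_neg]; exact h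
    exact sub_eq_zero.1 ((smul_eq_zero.1 this).resolve_right hX)
  · -- `e k, e l, e a, e b` can only be independent if `{a, b} = {i, j}`
    rintro ⟨a, b⟩ ⟨h1, h2⟩
    rw [ιMulti_eq_zero_of_not_inj, smul_zero]
    intro hinj'
    rcases Fin.eq_or_swap_of_injective_vecCons_four k l i j a b hinj hinj'.of_comp with
      ⟨rfl, rfl⟩ | ⟨rfl, rfl⟩
    · exact h1 rfl
    · exact h2 rfl

end Field

end ExteriorAlgebra

theorem projEq_iff {V : Type*} [AddCommGroup V] [Module ℂ V]
    (Z : Submodule ℂ (ExteriorAlgebra ℂ V)) (u u' : ExteriorAlgebra ℂ V) :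
    ProjEq Z u u' ↔ ∃ c : ℂ, c ≠ 0 ∧ u' - c • u ∈ Z := by
  rw [ProjEq, Submodule.span_singleton_eq_span_singleton]
  constructor
  · rintro ⟨c, hc⟩
    refine ⟨c, c.ne_zero, (Submodule.Quotient.eq Z).1 ?_⟩
    simpa [Units.smul_def] using hc.symm
  · rintro ⟨c, hc, hcZ⟩
    refine ⟨Units.mk0 c hc, ?_⟩
    simpa using ((Submodule.Quotient.eq Z).2 hcZ).symm

theorem IsPluckerVector.exists_pair {V : Type*} [AddCommGroup V] [Module ℂ V]
    {Λ : Submodule ℂ V} {u : ExteriorAlgebra ℂ V} (h : IsPluckerVector 2 Λ u)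
    (hΛ : Module.finrank ℂ Λ = 2) :
    ∃ a b : V, LinearIndependent ℂ ![a, b] ∧ Submodule.span ℂ {a, b} = Λ ∧
      u = ι ℂ a * ι ℂ b := by
  obtain ⟨v, rfl, rfl⟩ := h
  have hv : v = ![v 0, v 1] := by ext i; fin_cases i <;> rfl
  rw [hv, Matrix.range_cons_cons_empty] at hΛ ⊢
  refine ⟨v 0, v 1, ?_, rfl, by simp⟩
  rw [linearIndependent_iff_card_eq_finrank_span, Set.finrank, Matrix.range_cons_cons_empty, hΛ]
  simp

section BilinearForm

variable {K V : Type*} [Field K] [AddCommGroup V] [Module K V] [FiniteDimensional K V]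
  {Ω σ : ExteriorAlgebra K V} {B : V →ₗ[K] V →ₗ[K] K}

open Submodule

theorem forall_mem_iff_of_smul_eq_sub_smul (hV : Module.finrank K V = 4) (hΩ : Ω ≠ 0)
    (hσ : ¬∃ v w : V, σ = ι K v * ι K w) (hB : ∀ v w : V, ι K v * ι K w * σ = B v w • Ω)
    {a b a' b' : V} (hab : LinearIndependent K ![a, b]) (hab' : LinearIndependent K ![a', b'])
    (hΛ : Module.finrank K (span K {a, b}) = 2) (hΛ' : Module.finrank K (span K {a', b'}) = 2)
    (hne : span K {a, b} ≠ span K {a', b'}) {c d : K} (hc : c ≠ 0)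
    (h : d • σ = ι K a' * ι K b' - c • (ι K a * ι K b)) :
    ∀ w : V, w ∈ span K {a', b'} ↔ ∀ v ∈ span K {a, b}, B w v = 0 := by
  have hwedge : ∀ w x : V, d • B w x • Ω =
      ι K w * ι K x * (ι K a' * ι K b') - c • (ι K w * ι K x * (ι K a * ι K b)) := by
    intro w x
    rw [← hB, ← mul_smul_comm, h, mul_sub, mul_smul_comm]
  have hd : d ≠ 0 := by
    rintro rfl
    rw [zero_smul, eq_comm, sub_eq_zero] at h
    refine hne (Submodule.ext fun w => ?_)
    rw [← ι_mul_ι_mul_ι_eq_zero_iff hab, ← ι_mul_ι_mul_ι_eq_zero_iff hab', h, mul_smul_comm,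
      smul_eq_zero, or_iff_right hc]
  have hdisj := disjoint_of_smul_eq_sub_smul hσ hd h
  intro w
  constructor
  · intro hw x hx
    have hu' : ι K w * ι K x * (ι K a' * ι K b') = 0 := by
      rw [ι_mul_ι_comm, neg_mul, mul_assoc, (ι_mul_ι_mul_ι_eq_zero_iff hab' w).2 hw, mul_zero,
        neg_zero]
    have hu : ι K w * ι K x * (ι K a * ι K b) = 0 := by
      rw [mul_assoc, (ι_mul_ι_mul_ι_eq_zero_iff hab x).2 hx, mul_zero]
    have : d • B w x • Ω = 0 := by rw [hwedge, hu, hu', smul_zero, sub_zero]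
    simpa [hd, hΩ] using this
  · intro hw
    by_contra hw'
    have hind : LinearIndependent K ![w, a', b'] :=
      linearIndependent_finCons.2 ⟨hab', by rwa [Matrix.range_cons_cons_empty]⟩
    have hle : span K {a, b} ⊔ span K {a', b'} ≤ span K (Set.range ![w, a', b']) := by
      refine sup_le (fun x hx => ?_)
        (span_mono (by simp [Matrix.range_cons, Set.insert_subset_iff]))
      have hu : ι K w * ι K x * (ι K a * ι K b) = 0 := by
        rw [mul_assoc, (ι_mul_ι_mul_ι_eq_zero_iff hab x).2 hx, mul_zero]
      have := hwedge w x
      rw [hw x hx, zero_smul, smul_zero, hu, smul_zero, sub_zero, ι_mul_ι_comm w x, neg_mul,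
        eq_comm, neg_eq_zero, mul_assoc] at this
      rw [← ι_mul_ιMulti_eq_zero_iff hind]
      simpa [Matrix.vecTail] using this
    have := finrank_mono ((eq_top_of_disjoint _ _ (by rw [hV, hΛ, hΛ']) hdisj).symm.le.trans hle)
    rw [finrank_top, hV, finrank_span_eq_card hind] at this
    simp at this

theorem disjoint_of_forall_mem_iff (hΩ : Ω ≠ 0) (hB : ∀ v w : V, ι K v * ι K w * σ = B v w • Ω)
    {a b : V} {L : Submodule K V} (hrank : Module.finrank K (span K {a, b}) = Module.finrank K L)
    (hne : span K {a, b} ≠ L) (hperp : ∀ w : V, w ∈ L ↔ ∀ v ∈ span K {a, b}, B w v = 0) :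
    Disjoint (span K {a, b}) L := by
  rw [Submodule.disjoint_def]
  by_contra! h
  obtain ⟨e, he, he', he0⟩ := h
  obtain ⟨g, hg, hu⟩ := exists_ι_mul_ι_eq_ι_mul_ι he he0
  refine hne (eq_of_le_of_finrank_eq (fun y hy => (hperp y).2 fun x hx => ?_) hrank)
  obtain ⟨t, ht⟩ := mem_span_singleton.1 (ι_mul_ι_mem_span_singleton hy hx)
  have : B y x • Ω = 0 := by
    rw [← hB, ← ht, hu, smul_mul_assoc, hB, (hperp e).1 he' g hg, zero_smul, smul_zero]
  exact (smul_eq_zero.1 this).resolve_right hΩ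

theorem exists_smul_eq_sub_smul_of_forall_mem_iff (hV : Module.finrank K V = 4) (hΩ : Ω ≠ 0)
    (hσmem : σ ∈ ⋀[K]^2 V) (hσ : ¬∃ v w : V, σ = ι K v * ι K w)
    (hB : ∀ v w : V, ι K v * ι K w * σ = B v w • Ω)
    {a b a' b' : V} (hΛ : Module.finrank K (span K {a, b}) = 2)
    (hΛ' : Module.finrank K (span K {a', b'}) = 2) (hne : span K {a, b} ≠ span K {a', b'})
    (hperp : ∀ w : V, w ∈ span K {a', b'} ↔ ∀ v ∈ span K {a, b}, B w v = 0) :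
    ∃ c : K, c ≠ 0 ∧ ∃ d : K, d • σ = ι K a' * ι K b' - c • (ι K a * ι K b) := by
  have hdisj := disjoint_of_forall_mem_iff hΩ hB (hΛ.trans hΛ'.symm) hne hperp
  set e : Fin 4 → V := ![a, b, a', b']
  have hspan : span K (Set.range e) = ⊤ := by
    rw [← eq_top_of_disjoint _ _ (by rw [hV, hΛ, hΛ']) hdisj, ← span_union]
    congr 1
    ext x
    simp only [e, Matrix.range_cons, Matrix.range_empty, Set.union_empty, Set.union_singleton,
      Set.union_insert, Set.mem_insert_iff, Set.mem_singleton_iff]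
    tauto
  have he : LinearIndependent K e :=
    linearIndependent_of_top_le_span_of_card_eq_finrank hspan.ge (by simp [hV])
  obtain ⟨c, rfl⟩ := exists_sum_ι_mul_ι_of_mem_exteriorPower_two hspan hσmem
  have hsymm : ∀ k l i j, Function.Injective ![k, l, i, j] → e k ∈ span K {a', b'} →
      e l ∈ span K {a, b} → c i j = c j i := fun k l i j hinj hk hl =>
    coeff_comm_of_ι_mul_ι_mul_sum_eq_zero he c hinj (by rw [hB, (hperp _).1 hk _ hl, zero_smul])
  have h2 : e 2 ∈ span K {a', b'} := subset_span (by simp [e])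
  have h3 : e 3 ∈ span K {a', b'} := subset_span (by simp [e])
  have h0 : e 0 ∈ span K {a, b} := subset_span (by simp [e])
  have h1 : e 1 ∈ span K {a, b} := subset_span (by simp [e])
  rw [sum_ι_mul_ι_fin_four e c (hsymm 3 1 0 2 (by decide) h3 h1) (hsymm 2 1 0 3 (by decide) h2 h1)
    (hsymm 3 0 1 2 (by decide) h3 h0) (hsymm 2 0 1 3 (by decide) h2 h0)] at hσ ⊢
  generalize c 0 1 - c 1 0 = α at hσ ⊢
  generalize c 2 3 - c 3 2 = β at hσ ⊢
  have hα : α ≠ 0 := fun hα => hσ ⟨β • e 2, e 3, by simp [hα]⟩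
  have hβ : β ≠ 0 := fun hβ => hσ ⟨α • e 0, e 1, by simp [hβ]⟩
  refine ⟨-(β⁻¹ * α), by simp [hα, hβ], β⁻¹, ?_⟩
  show β⁻¹ • (α • (ι K a * ι K b) + β • (ι K a' * ι K b')) = _
  rw [smul_add, smul_smul, smul_smul, inv_mul_cancel₀ hβ, one_smul]
  module

end BilinearForm

theorem stmt1 {V : Type*} [AddCommGroup V] [Module ℂ V] [FiniteDimensional ℂ V]
    (hV : Module.finrank ℂ V = 4)
    (Ω : ExteriorAlgebra ℂ V) (hΩ : Ω ≠ 0)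
    (σ : ExteriorAlgebra ℂ V) (hσmem : σ ∈ ⋀[ℂ]^2 V)
    (hσ : ¬ ∃ v w : V, σ = ι ℂ v * ι ℂ w)
    (B : V →ₗ[ℂ] V →ₗ[ℂ] ℂ)
    (hB : ∀ v w : V, ι ℂ v * ι ℂ w * σ = B v w • Ω)
    (Λ Λ' : Submodule ℂ V)
    (hΛ : Module.finrank ℂ Λ = 2) (hΛ' : Module.finrank ℂ Λ' = 2)
    (hne : Λ ≠ Λ')
    (u u' : ExteriorAlgebra ℂ V)
    (hu : IsPluckerVector 2 Λ u) (hu' : IsPluckerVector 2 Λ' u') :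
    ProjEq (Submodule.span ℂ {σ}) u u' ↔
      (∀ w : V, w ∈ Λ' ↔ ∀ v ∈ Λ, B w v = 0) := by
  obtain ⟨a, b, hab, rfl, rfl⟩ := hu.exists_pair hΛ
  obtain ⟨a', b', hab', rfl, rfl⟩ := hu'.exists_pair hΛ'
  simp only [projEq_iff, Submodule.mem_span_singleton]
  constructor
  · rintro ⟨c, hc, d, h⟩
    exact forall_mem_iff_of_smul_eq_sub_smul hV hΩ hσ hB hab hab' hΛ hΛ' hne hc h
  · exact exists_smul_eq_sub_smul_of_forall_mem_iff hV hΩ hσmem hσ hB hΛ hΛ' hne
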